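/- Let ε₀ > 0 and let κ : (0, ε₀) → ℂ be any function such that for every ε ∈ (0, ε₀) one has (α₊+2κ(ε))(α₋+2κ(ε)) = α₊α₋·e^{-4κ(ε)ε}, Re κ(ε) > 0, and κ(ε) → κ₀ as ε → 0⁺. Then there exist ε₁ ∈ (0, ε₀] and C > 0 such that for all ε ∈ (0, ε₁), sup_{x ∈ ℝ} |f_{ε,κ(ε)}(x) - f₀(x)| ≤ C·ε. -/

import Mathlib

open MeasureTheory Set

/-- The eigenfunction `f_{ε,κ}` of the two-delta-interaction operator, in the
normalisation with unit coefficient on the left exponential. -/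
noncomputable def fTwo (αm : ℂ) (ε : ℝ) (κ : ℂ) : ℝ → ℂ := fun x =>
  if x < -ε then Complex.exp (κ * x)
  else if x ≤ ε then
    (-(αm / (2 * κ)) * Complex.exp (-2 * κ * ε)) * Complex.exp (-κ * x) +
      ((αm + 2 * κ) / (2 * κ)) * Complex.exp (κ * x)
  else
    (Complex.exp (2 * κ * ε) +
        (αm / (2 * κ)) * (Complex.exp (2 * κ * ε) - Complex.exp (-2 * κ * ε))) *
      Complex.exp (-κ * x)

/-!
Expanding the eigenvalue equation gives `4κ(κ - κ₀) = α₊α₋(e^{-4κε} - 1)`, so `|κ(ε) - κ₀| = O(ε)`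
as soon as `κ(ε)` is close to `κ₀`. On `|x| ≤ ε` every exponential occurring in `f_{ε,κ}` and `f₀` is
`1 + O(ε)` and the coefficients of `f_{ε,κ}` add up to `1`. For `|x| > ε`, `f_{ε,κ}(x)` is
`e^{-κ|x|}` up to an `O(ε)` change of coefficient, and `|e^{-κ|x|} - e^{-κ₀|x|}| ≤ |κ - κ₀| / c`
uniformly in `x` once both real parts are at least `c > 0`, because `c t e^{-c t} ≤ 1`.
-/

section

open Complex

theorem norm_cexp_sub_cexp_le (u v : ℂ) :
    ‖cexp u - cexp v‖ ≤ Real.exp (max u.re v.re) * ‖u - v‖ := by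
  have hs : Convex ℝ {z : ℂ | z.re ≤ max u.re v.re} := convex_halfSpace_re_le _
  refine hs.norm_image_sub_le_of_norm_deriv_le (fun z _ => differentiableAt_exp)
    (fun z hz => ?_) (le_max_right u.re v.re) (le_max_left u.re v.re)
  rw [Complex.deriv_exp, Complex.norm_exp]
  exact Real.exp_le_exp.2 hz

theorem norm_cexp_sub_one_le_of_le {w : ℂ} {r : ℝ} (hw : ‖w‖ ≤ r) (hr : r ≤ 1) :
    ‖cexp w - 1‖ ≤ 2 * r :=
  (norm_exp_sub_one_le (hw.trans hr)).trans (by linarith)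

theorem norm_mul_ofReal_le {z : ℂ} {t M ε : ℝ} (hz : ‖z‖ ≤ M) (ht : |t| ≤ ε) :
    ‖z * t‖ ≤ M * ε := by
  rw [norm_mul, Complex.norm_real, Real.norm_eq_abs]
  exact mul_le_mul hz ht (abs_nonneg t) ((norm_nonneg z).trans hz)

theorem norm_cexp_neg_mul_sub_le {κ κ₀ : ℂ} {c x : ℝ} (hc : 0 < c) (hκ : c ≤ κ.re)
    (hκ₀ : c ≤ κ₀.re) (hx : 0 ≤ x) :
    ‖cexp (-κ * x) - cexp (-κ₀ * x)‖ ≤ ‖κ - κ₀‖ / c := by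
  have hmax : max (-κ * x).re (-κ₀ * x).re ≤ -(c * x) := by
    simp only [neg_mul, neg_re, re_mul_ofReal]
    exact max_le (by nlinarith) (by nlinarith)
  have hdecay : c * x * Real.exp (-(c * x)) ≤ 1 := by
    rw [Real.exp_neg, ← div_eq_mul_inv, div_le_one (Real.exp_pos _)]
    linarith [Real.add_one_le_exp (c * x)]
  calc ‖cexp (-κ * x) - cexp (-κ₀ * x)‖
      ≤ Real.exp (-(c * x)) * ‖-κ * x - -κ₀ * x‖ :=
        (norm_cexp_sub_cexp_le _ _).trans (by gcongr)
    _ = ‖κ - κ₀‖ * (c * x * Real.exp (-(c * x))) / c := by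
        rw [← sub_mul, norm_mul, norm_real, Real.norm_of_nonneg hx, neg_sub_neg, norm_sub_rev]
        field_simp
    _ ≤ ‖κ - κ₀‖ / c := by gcongr; exact mul_le_of_le_one_right (norm_nonneg _) hdecay

theorem norm_sub_le_of_eigenvalue_eq {αp αm κ : ℂ} {ε : ℝ} (hκ : κ ≠ 0) (hε : 0 ≤ ε)
    (hsmall : 4 * ‖κ‖ * ε ≤ 1)
    (heq : (αp + 2 * κ) * (αm + 2 * κ) = αp * αm * cexp (-4 * κ * ε)) :
    ‖κ - -(αp + αm) / 2‖ ≤ 2 * ‖αp‖ * ‖αm‖ * ε := by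
  have hfactor : 4 * κ * (κ - -(αp + αm) / 2) = αp * αm * (cexp (-4 * κ * ε) - 1) := by
    linear_combination heq
  have hnorm : ‖-4 * κ * ε‖ = 4 * ‖κ‖ * ε := by
    simp [abs_of_nonneg hε]
  have hexp := norm_exp_sub_one_le (hnorm ▸ hsmall)
  refine le_of_mul_le_mul_left (a := 4 * ‖κ‖) ?_ (by positivity)
  calc 4 * ‖κ‖ * ‖κ - -(αp + αm) / 2‖ = ‖αp‖ * ‖αm‖ * ‖cexp (-4 * κ * ε) - 1‖ := by
        simpa using congrArg norm hfactor
    _ ≤ ‖αp‖ * ‖αm‖ * (2 * (4 * ‖κ‖ * ε)) := by rw [← hnorm]; gcongr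
    _ = 4 * ‖κ‖ * (2 * ‖αp‖ * ‖αm‖ * ε) := by ring

variable {αm κ κ₀ : ℂ} {ε c M x : ℝ}

theorem norm_fTwo_sub_of_lt_neg (hε : 0 ≤ ε) (hc : 0 < c) (hκ : c ≤ κ.re) (hκ₀ : c ≤ κ₀.re)
    (hx : x < -ε) : ‖fTwo αm ε κ x - cexp (-κ₀ * |x|)‖ ≤ ‖κ - κ₀‖ / c := by
  have hval : fTwo αm ε κ x = cexp (-κ * |x|) := by
    rw [fTwo, if_pos hx, abs_of_neg (by linarith)]
    push_cast
    ring_nf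
  rw [hval]
  exact norm_cexp_neg_mul_sub_le hc hκ hκ₀ (abs_nonneg x)

theorem norm_fTwo_sub_of_abs_le (hκ : κ ≠ 0) (hM : ‖κ‖ ≤ M) (hM₀ : ‖κ₀‖ ≤ M)
    (hsmall : 4 * M * ε ≤ 1) (hx : |x| ≤ ε) :
    ‖fTwo αm ε κ x - cexp (-κ₀ * |x|)‖ ≤ (4 + 8 * ‖αm / (2 * κ)‖) * M * ε := by
  set β := αm / (2 * κ)
  obtain ⟨hx₁, hx₂⟩ := abs_le.1 hx
  have hval : fTwo αm ε κ x - cexp (-κ₀ * |x|) = -β * (cexp (κ * ↑(-2 * ε - x)) - 1)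
      + (1 + β) * (cexp (κ * x) - 1) - (cexp (-κ₀ * |x|) - 1) := by
    rw [fTwo, if_neg (by linarith), if_pos hx₂]
    push_cast
    rw [show κ * (-2 * ε - x) = -2 * κ * ε + -κ * x by ring, Complex.exp_add]
    simp only [β]
    field_simp
    ring
  have hME : M * ε ≤ 1 := by nlinarith [(norm_nonneg κ).trans hM, abs_nonneg x]
  have h₁ : ‖cexp (κ * ↑(-2 * ε - x)) - 1‖ ≤ 2 * (M * (3 * ε)) :=
    norm_cexp_sub_one_le_of_le (norm_mul_ofReal_le hM (abs_le.2 ⟨by linarith, by linarith⟩))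
      (by linarith)
  have h₂ : ‖cexp (κ * x) - 1‖ ≤ 2 * (M * ε) :=
    norm_cexp_sub_one_le_of_le (norm_mul_ofReal_le hM hx) hME
  have h₃ : ‖cexp (-κ₀ * |x|) - 1‖ ≤ 2 * (M * ε) :=
    norm_cexp_sub_one_le_of_le (norm_mul_ofReal_le (by rwa [norm_neg]) (by rwa [abs_abs])) hME
  have h1β : ‖1 + β‖ ≤ 1 + ‖β‖ := (norm_add_le 1 β).trans_eq (by rw [norm_one])
  rw [hval]
  calc _ ≤ ‖β‖ * ‖cexp (κ * ↑(-2 * ε - x)) - 1‖ + (1 + ‖β‖) * ‖cexp (κ * x) - 1‖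
        + ‖cexp (-κ₀ * |x|) - 1‖ := by
        refine (norm_sub_le _ _).trans ?_
        gcongr
        refine (norm_add_le _ _).trans ?_
        rw [norm_mul, norm_mul, norm_neg]
        gcongr
    _ ≤ ‖β‖ * (2 * (M * (3 * ε))) + (1 + ‖β‖) * (2 * (M * ε)) + 2 * (M * ε) := by gcongr
    _ = (4 + 8 * ‖β‖) * M * ε := by ring

theorem norm_fTwo_sub_of_lt (hε : 0 ≤ ε) (hc : 0 < c) (hκ : c ≤ κ.re) (hκ₀ : c ≤ κ₀.re)
    (hM : ‖κ‖ ≤ M) (hsmall : 4 * M * ε ≤ 1) (hx : ε < x) :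
    ‖fTwo αm ε κ x - cexp (-κ₀ * |x|)‖ ≤ (4 + 8 * ‖αm / (2 * κ)‖) * M * ε + ‖κ - κ₀‖ / c := by
  set β := αm / (2 * κ)
  have hM0 : 0 ≤ M := (norm_nonneg κ).trans hM
  have hx0 : 0 ≤ x := by linarith
  have hval : fTwo αm ε κ x - cexp (-κ₀ * |x|) =
      ((cexp (κ * ↑(2 * ε)) - 1) + β * ((cexp (κ * ↑(2 * ε)) - 1) - (cexp (κ * ↑(-2 * ε)) - 1)))
        * cexp (-κ * x) + (cexp (-κ * x) - cexp (-κ₀ * x)) := by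
    rw [fTwo, if_neg (by linarith), if_neg (by linarith), abs_of_nonneg hx0]
    push_cast
    simp only [β]
    ring_nf
  have hdecay : ‖cexp (-κ * x)‖ ≤ 1 := by
    rw [norm_exp, Real.exp_le_one_iff, neg_mul, neg_re, re_mul_ofReal, neg_nonpos]
    nlinarith
  have hε2 : |2 * ε| ≤ 2 * ε := (abs_of_nonneg (by linarith)).le
  have hε2' : |-2 * ε| ≤ 2 * ε := by rw [abs_mul]; norm_num [abs_of_nonneg hε]
  have hME : M * (2 * ε) ≤ 1 := by nlinarith
  have h₁ := norm_cexp_sub_one_le_of_le (norm_mul_ofReal_le hM hε2) hME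
  have h₂ := norm_cexp_sub_one_le_of_le (norm_mul_ofReal_le hM hε2') hME
  have hcoef : ‖(cexp (κ * ↑(2 * ε)) - 1)
      + β * ((cexp (κ * ↑(2 * ε)) - 1) - (cexp (κ * ↑(-2 * ε)) - 1))‖
      ≤ (4 + 8 * ‖β‖) * M * ε := by
    calc _ ≤ ‖cexp (κ * ↑(2 * ε)) - 1‖
          + ‖β‖ * (‖cexp (κ * ↑(2 * ε)) - 1‖ + ‖cexp (κ * ↑(-2 * ε)) - 1‖) := by
          refine (norm_add_le _ _).trans ?_
          rw [norm_mul]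
          gcongr
          exact norm_sub_le _ _
      _ ≤ 2 * (M * (2 * ε)) + ‖β‖ * (2 * (M * (2 * ε)) + 2 * (M * (2 * ε))) := by gcongr
      _ = (4 + 8 * ‖β‖) * M * ε := by ring
  rw [hval]
  calc _ ≤ ‖(cexp (κ * ↑(2 * ε)) - 1)
          + β * ((cexp (κ * ↑(2 * ε)) - 1) - (cexp (κ * ↑(-2 * ε)) - 1))‖ * ‖cexp (-κ * x)‖
        + ‖cexp (-κ * x) - cexp (-κ₀ * x)‖ := (norm_add_le _ _).trans_eq (by rw [norm_mul])
    _ ≤ (4 + 8 * ‖β‖) * M * ε * 1 + ‖κ - κ₀‖ / c := by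
        gcongr
        exact norm_cexp_neg_mul_sub_le hc hκ hκ₀ hx0
    _ = (4 + 8 * ‖β‖) * M * ε + ‖κ - κ₀‖ / c := by rw [mul_one]

theorem norm_fTwo_sub_le (hε : 0 ≤ ε) (hc : 0 < c) (hκ : c ≤ κ.re) (hκ₀ : c ≤ κ₀.re)
    (hM : ‖κ‖ ≤ M) (hM₀ : ‖κ₀‖ ≤ M) (hsmall : 4 * M * ε ≤ 1) (x : ℝ) :
    ‖fTwo αm ε κ x - cexp (-κ₀ * |x|)‖ ≤ (4 + 8 * ‖αm / (2 * κ)‖) * M * ε + ‖κ - κ₀‖ / c := by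
  have hM0 : 0 ≤ M := (norm_nonneg κ).trans hM
  rcases lt_or_ge x (-ε) with hx | hx
  · exact (norm_fTwo_sub_of_lt_neg hε hc hκ hκ₀ hx).trans (le_add_of_nonneg_left (by positivity))
  rcases le_or_gt x ε with hx' | hx'
  · have hκ0 : κ ≠ 0 := fun h => by simp [h] at hκ; linarith
    exact (norm_fTwo_sub_of_abs_le hκ0 hM hM₀ hsmall (abs_le.2 ⟨hx, hx'⟩)).trans
      (le_add_of_nonneg_right (by positivity))
  · exact norm_fTwo_sub_of_lt hε hc hκ hκ₀ hM hsmall hx'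

end

theorem stmt_9_general (αp αm : ℂ) (hα : (αp + αm).re < 0) (ε₀ : ℝ) (hε₀ : 0 < ε₀)
    (κ : ℝ → ℂ)
    (heq : ∀ ε ∈ Ioo (0 : ℝ) ε₀,
      (αp + 2 * κ ε) * (αm + 2 * κ ε) = αp * αm * Complex.exp (-4 * κ ε * ε))
    (hlim : Filter.Tendsto κ (nhdsWithin 0 (Ioi (0 : ℝ))) (nhds (-(αp + αm) / 2))) :
    let f₀ : ℝ → ℂ := fun x => Complex.exp ((αp + αm) * (|x| : ℝ) / 2)
    ∃ ε₁ : ℝ, 0 < ε₁ ∧ ε₁ ≤ ε₀ ∧ ∃ C > (0 : ℝ), ∀ ε ∈ Ioo (0 : ℝ) ε₁,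
      ∀ x : ℝ, ‖fTwo αm ε (κ ε) x - f₀ x‖ ≤ C * ε := by
  intro f₀
  set κ₀ : ℂ := -(αp + αm) / 2
  set c : ℝ := κ₀.re / 2
  have hκ₀c : κ₀.re = 2 * c := by simp only [c]; ring
  have hc : 0 < c := by simp [c, κ₀] at hα ⊢; linarith
  set M : ℝ := ‖κ₀‖ + c
  have hM : 0 < M := by positivity
  obtain ⟨η, hη, hclose⟩ := Metric.tendsto_nhdsWithin_nhds.1 hlim c hc
  refine ⟨min ε₀ (min η (1 / (4 * M))), lt_min hε₀ (lt_min hη (by positivity)), min_le_left _ _,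
    (4 + 4 * ‖αm‖ / c) * M + 2 * ‖αp‖ * ‖αm‖ / c, by positivity, ?_⟩
  rintro ε ⟨hε, hεε₁⟩ x
  simp only [lt_min_iff, lt_div_iff₀ (by positivity : (0 : ℝ) < 4 * M)] at hεε₁
  obtain ⟨hεε₀, hεη, hsmall⟩ := hεε₁
  have hnear : ‖κ ε - κ₀‖ < c := by
    simpa [dist_eq_norm, abs_of_pos hε] using hclose (mem_Ioi.2 hε) (by simpa [abs_of_pos hε])
  have hre : c ≤ (κ ε).re := by
    have := (abs_le.1 ((Complex.abs_re_le_norm (κ ε - κ₀)).trans hnear.le)).1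
    rw [Complex.sub_re] at this
    linarith
  have hκM : ‖κ ε‖ ≤ M := by
    linarith [norm_le_norm_add_norm_sub' (κ ε) κ₀]
  have hκ0 : κ ε ≠ 0 := fun h => by simp [h] at hre; linarith
  have hkey := norm_sub_le_of_eigenvalue_eq hκ0 hε.le (by nlinarith) (heq ε ⟨hε, hεε₀⟩)
  have hβ : ‖αm / (2 * κ ε)‖ ≤ ‖αm‖ / (2 * c) := by
    rw [norm_div, norm_mul, Complex.norm_two]
    gcongr
    exact hre.trans (Complex.re_le_norm _)
  have hf₀ : f₀ x = Complex.exp (-κ₀ * |x|) := by simp only [f₀, κ₀]; ring_nf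
  rw [hf₀]
  calc _ ≤ (4 + 8 * ‖αm / (2 * κ ε)‖) * M * ε + ‖κ ε - κ₀‖ / c :=
        norm_fTwo_sub_le hε.le hc hre (by linarith) hκM (le_add_of_nonneg_right hc.le)
          (by linarith) x
    _ ≤ (4 + 8 * (‖αm‖ / (2 * c))) * M * ε + 2 * ‖αp‖ * ‖αm‖ * ε / c := by gcongr
    _ = ((4 + 4 * ‖αm‖ / c) * M + 2 * ‖αp‖ * ‖αm‖ / c) * ε := by field_simp; ring

/-- Uniform convergence of eigenfunctions in dimension one:
`sup_{x ∈ ℝ} |f_{ε,κ(ε)}(x) - f₀(x)| ≤ C ε` for all small `ε > 0`. -/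
theorem stmt_9 (αp αm : ℂ) (hα : (αp + αm).re < 0) (ε₀ : ℝ) (hε₀ : 0 < ε₀)
    (κ : ℝ → ℂ)
    (heq : ∀ ε ∈ Ioo (0 : ℝ) ε₀,
      (αp + 2 * κ ε) * (αm + 2 * κ ε) = αp * αm * Complex.exp (-4 * κ ε * ε))
    (hre : ∀ ε ∈ Ioo (0 : ℝ) ε₀, 0 < (κ ε).re)
    (hlim : Filter.Tendsto κ (nhdsWithin 0 (Ioi (0 : ℝ))) (nhds (-(αp + αm) / 2))) :
    let f₀ : ℝ → ℂ := fun x => Complex.exp ((αp + αm) * (|x| : ℝ) / 2)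
    ∃ ε₁ : ℝ, 0 < ε₁ ∧ ε₁ ≤ ε₀ ∧ ∃ C > (0 : ℝ), ∀ ε ∈ Ioo (0 : ℝ) ε₁,
      ∀ x : ℝ, ‖fTwo αm ε (κ ε) x - f₀ x‖ ≤ C * ε :=
  stmt_9_general αp αm hα ε₀ hε₀ κ heq hlim
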